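/- For β ≥ 0 and ρ ∈ [0,1) define G_β(ρ) := ∑_{n≥0} (1/2)_n (β/2)_n / ( ((β+1)/2)_n · n! ) · ρ^{2n}. Then for all 0 ≤ β₁ ≤ β₂ < ∞ and all ρ ∈ [0,1): 1 ≤ G_{β₁}(ρ) ≤ G_{β₂}(ρ) ≤ 1/√(1 − ρ²). -/
import Mathlib

/-- `G_β(ρ) = ∑_{n≥0} (1/2)_n (β/2)_n / (((β+1)/2)_n n!) · ρ^(2n)`
(equal to `₂F₁(1/2, β/2; (β+1)/2; ρ²)`). -/
noncomputable def Gfun (β ρ : ℝ) : ℝ :=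
  ∑' n : ℕ,
    (Polynomial.eval (1 / 2 : ℝ) (ascPochhammer ℝ n) *
        Polynomial.eval (β / 2) (ascPochhammer ℝ n)) /
      (Polynomial.eval ((β + 1) / 2) (ascPochhammer ℝ n) * (n.factorial : ℝ)) * ρ ^ (2 * n)


open Polynomial Finset

noncomputable def Pev (x : ℝ) (n : ℕ) : ℝ := (ascPochhammer ℝ n).eval x

lemma Pev_zero (x : ℝ) : Pev x 0 = 1 := by simp [Pev]

lemma Pev_succ (x : ℝ) (n : ℕ) : Pev x (n+1) = Pev x n * (x + n) := by
  simp [Pev, ascPochhammer_succ_eval]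

lemma Pev_nonneg {x : ℝ} (hx : 0 ≤ x) (n : ℕ) : 0 ≤ Pev x n := by
  induction n with
  | zero => simp [Pev_zero]
  | succ n ih =>
    rw [Pev_succ]
    have : (0:ℝ) ≤ x + n := by positivity
    exact mul_nonneg ih this

lemma Pev_pos {x : ℝ} (hx : 0 < x) (n : ℕ) : 0 < Pev x n := ascPochhammer_pos n x hx

noncomputable def aa (n : ℕ) : ℝ := Pev (1/2) n / n.factorial

lemma aa_zero : aa 0 = 1 := by simp [aa, Pev_zero]

lemma aa_nonneg (n : ℕ) : 0 ≤ aa n :=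
  div_nonneg (Pev_nonneg (by norm_num) n) (Nat.cast_nonneg _)

lemma aa_succ (n : ℕ) : ((n:ℝ)+1) * aa (n+1) = ((n:ℝ) + 1/2) * aa n := by
  have hf : ((n+1).factorial : ℝ) = ((n:ℝ)+1) * n.factorial := by
    rw [Nat.factorial_succ]; push_cast; ring
  have hn : (n.factorial : ℝ) ≠ 0 := by positivity
  have hn1 : ((n:ℝ)+1) ≠ 0 := by positivity
  rw [aa, aa, Pev_succ, hf]
  field_simp
  ring

lemma aa_le_one (n : ℕ) : aa n ≤ 1 := by
  induction n with
  | zero => simp [aa_zero]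
  | succ n ih =>
    have h := aa_succ n
    have hn1 : (0:ℝ) < (n:ℝ)+1 := by positivity
    have : aa (n+1) = ((n:ℝ) + 1/2) / ((n:ℝ)+1) * aa n := by
      field_simp; linarith [h]
    rw [this]
    have h1 : ((n:ℝ) + 1/2) / ((n:ℝ)+1) ≤ 1 := by
      rw [div_le_one hn1]; linarith
    calc ((n:ℝ) + 1/2) / ((n:ℝ)+1) * aa n ≤ 1 * aa n := by
          apply mul_le_mul_of_nonneg_right h1 (aa_nonneg n)
      _ = aa n := one_mul _
      _ ≤ 1 := ih

noncomputable def rr (β : ℝ) (n : ℕ) : ℝ := Pev (β/2) n / Pev ((β+1)/2) n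

lemma rr_zero (β : ℝ) : rr β 0 = 1 := by simp [rr, Pev_zero]

lemma rr_succ (β : ℝ) (n : ℕ) :
    rr β (n+1) = rr β n * ((β/2 + n) / ((β+1)/2 + n)) := by
  rw [rr, rr, Pev_succ, Pev_succ, div_mul_div_comm]

lemma rr_nonneg {β : ℝ} (hβ : 0 ≤ β) (n : ℕ) : 0 ≤ rr β n :=
  div_nonneg (Pev_nonneg (by linarith) n) (Pev_nonneg (by linarith) n)

lemma rr_le_one {β : ℝ} (hβ : 0 ≤ β) (n : ℕ) : rr β n ≤ 1 := by
  induction n with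
  | zero => simp [rr_zero]
  | succ n ih =>
    rw [rr_succ]
    have hd : (0:ℝ) < (β+1)/2 + n := by positivity
    have h1 : (β/2 + n) / ((β+1)/2 + n) ≤ 1 := by
      rw [div_le_one hd]; linarith
    have h0 : (0:ℝ) ≤ (β/2 + n) / ((β+1)/2 + n) := by positivity
    calc rr β n * ((β/2 + n) / ((β+1)/2 + n)) ≤ 1 * 1 :=
          mul_le_mul ih h1 h0 zero_le_one
      _ = 1 := one_mul 1

lemma rr_mono {β₁ β₂ : ℝ} (h1 : 0 ≤ β₁) (h12 : β₁ ≤ β₂) (n : ℕ) :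
    rr β₁ n ≤ rr β₂ n := by
  induction n with
  | zero => simp [rr_zero]
  | succ n ih =>
    rw [rr_succ, rr_succ]
    have hn : (0:ℝ) ≤ n := Nat.cast_nonneg n
    have hd1 : (0:ℝ) < (β₁+1)/2 + n := by linarith
    have hd2 : (0:ℝ) < (β₂+1)/2 + n := by linarith
    have hf : (β₁/2 + n) / ((β₁+1)/2 + n) ≤ (β₂/2 + n) / ((β₂+1)/2 + n) := by
      rw [div_le_div_iff₀ hd1 hd2]; nlinarith
    have hf0 : (0:ℝ) ≤ (β₁/2 + n) / ((β₁+1)/2 + n) := by positivity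
    exact mul_le_mul ih hf hf0 (rr_nonneg (by linarith) n)

/-- The convolution identity `∑_{k≤n} a_k a_{n-k} = 1` for `a_k = (1/2)_k/k!`. -/
lemma conv_one (n : ℕ) : ∑ k ∈ range (n+1), aa k * aa (n-k) = 1 := by
  induction n with
  | zero => simp [aa_zero]
  | succ n ih =>
    set c1 : ℝ := ∑ k ∈ range (n+2), aa k * aa (n+1-k) with hc1
    set A : ℝ := ∑ k ∈ range (n+2), (k:ℝ) * (aa k * aa (n+1-k)) with hA
    set B : ℝ := ∑ k ∈ range (n+1), (k:ℝ) * (aa k * aa (n-k)) with hB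
    -- Fact 1 : 2*A = (n+1) * c1
    have fact1 : 2 * A = ((n:ℝ)+1) * c1 := by
      have hrefl : A = ∑ k ∈ range (n+2), (((n:ℝ)+1) - k) * (aa k * aa (n+1-k)) := by
        rw [hA, ← Finset.sum_range_reflect (fun k => (k:ℝ) * (aa k * aa (n+1-k))) (n+2)]
        apply Finset.sum_congr rfl
        intro j hj
        have hj' : j ≤ n + 1 := by
          have := Finset.mem_range.mp hj; omega
        have e1 : n + 2 - 1 - j = n + 1 - j := by omega
        have e2 : n + 1 - (n + 1 - j) = j := by omega
        have e3 : ((n + 1 - j : ℕ) : ℝ) = ((n:ℝ)+1) - j := by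
          push_cast [Nat.cast_sub (by omega : j ≤ n+1)]; ring
        rw [e1, e2, e3, mul_comm (aa (n+1-j)) (aa j)]
      have : A + A = ∑ k ∈ range (n+2), ((n:ℝ)+1) * (aa k * aa (n+1-k)) := by
        nth_rewrite 2 [hrefl]
        rw [hA, ← Finset.sum_add_distrib]
        apply Finset.sum_congr rfl
        intro j _; ring
      rw [two_mul, this, ← Finset.mul_sum, hc1]
    -- Fact 2 : 2*B = n * c (n)
    have fact2 : 2 * B = (n:ℝ) * ∑ k ∈ range (n+1), aa k * aa (n-k) := by
      have hrefl : B = ∑ k ∈ range (n+1), ((n:ℝ) - k) * (aa k * aa (n-k)) := by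
        rw [hB, ← Finset.sum_range_reflect (fun k => (k:ℝ) * (aa k * aa (n-k))) (n+1)]
        apply Finset.sum_congr rfl
        intro j hj
        have hj' : j ≤ n := by
          have := Finset.mem_range.mp hj; omega
        have e1 : n + 1 - 1 - j = n - j := by omega
        have e2 : n - (n - j) = j := by omega
        have e3 : ((n - j : ℕ) : ℝ) = (n:ℝ) - j := by
          push_cast [Nat.cast_sub hj']; ring
        rw [e1, e2, e3, mul_comm (aa (n-j)) (aa j)]
      have : B + B = ∑ k ∈ range (n+1), (n:ℝ) * (aa k * aa (n-k)) := by
        nth_rewrite 2 [hrefl]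
        rw [hB, ← Finset.sum_add_distrib]
        apply Finset.sum_congr rfl
        intro j _; ring
      rw [two_mul, this, ← Finset.mul_sum]
    -- Fact 3 : A = B + (1/2) * c n
    have fact3 : A = B + (1/2) * ∑ k ∈ range (n+1), aa k * aa (n-k) := by
      rw [hA, Finset.sum_range_succ']
      simp only [Nat.cast_zero, zero_mul, add_zero]
      have : ∀ j ∈ range (n+1),
          ((j+1 : ℕ):ℝ) * (aa (j+1) * aa (n+1-(j+1))) =
            (j:ℝ) * (aa j * aa (n-j)) + (1/2) * (aa j * aa (n-j)) := by
        intro j _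
        have e1 : n + 1 - (j+1) = n - j := by omega
        have h := aa_succ j
        rw [e1]
        push_cast
        calc ((j:ℝ)+1) * (aa (j+1) * aa (n-j))
            = (((j:ℝ)+1) * aa (j+1)) * aa (n-j) := by ring
          _ = (((j:ℝ) + 1/2) * aa j) * aa (n-j) := by rw [h]
          _ = (j:ℝ) * (aa j * aa (n-j)) + (1/2) * (aa j * aa (n-j)) := by ring
      rw [Finset.sum_congr rfl this, Finset.sum_add_distrib, ← Finset.mul_sum, hB]
    -- combine
    rw [ih] at fact2 fact3
    have hne : ((n:ℝ)+1) ≠ 0 := by positivity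
    have : ((n:ℝ)+1) * c1 = ((n:ℝ)+1) * 1 := by
      rw [← fact1, fact3]; linarith
    have := mul_left_cancel₀ hne this
    simpa [hc1] using this


lemma term_eq (β ρ : ℝ) (n : ℕ) :
    (Polynomial.eval (1 / 2 : ℝ) (ascPochhammer ℝ n) *
        Polynomial.eval (β / 2) (ascPochhammer ℝ n)) /
      (Polynomial.eval ((β + 1) / 2) (ascPochhammer ℝ n) * (n.factorial : ℝ)) * ρ ^ (2 * n)
    = aa n * rr β n * (ρ^2) ^ n := by
  have h1 : ρ ^ (2*n) = (ρ^2)^n := by rw [pow_mul]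
  rw [h1]
  congr 1
  rw [aa, rr, div_mul_div_comm]
  simp only [Pev]
  ring

lemma Gfun_eq (β ρ : ℝ) : Gfun β ρ = ∑' n : ℕ, aa n * rr β n * (ρ^2) ^ n :=
  tsum_congr (term_eq β ρ)

section main
variable {β ρ : ℝ}

lemma term_nonneg (hβ : 0 ≤ β) (hρ : 0 ≤ ρ) (n : ℕ) :
    0 ≤ aa n * rr β n * (ρ^2)^n :=
  mul_nonneg (mul_nonneg (aa_nonneg n) (rr_nonneg hβ n)) (by positivity)

lemma term_le (hβ : 0 ≤ β) (hρ : 0 ≤ ρ) (n : ℕ) :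
    aa n * rr β n * (ρ^2)^n ≤ aa n * (ρ^2)^n := by
  have : aa n * rr β n ≤ aa n * 1 :=
    mul_le_mul_of_nonneg_left (rr_le_one hβ n) (aa_nonneg n)
  have := mul_le_mul_of_nonneg_right this (by positivity : (0:ℝ) ≤ (ρ^2)^n)
  simpa using this

lemma sum_geom (hρ0 : 0 ≤ ρ) (hρ1 : ρ < 1) : Summable (fun n : ℕ => (ρ^2)^n) :=
  summable_geometric_of_lt_one (by positivity) (by nlinarith)

lemma sum_aa (hρ0 : 0 ≤ ρ) (hρ1 : ρ < 1) : Summable (fun n : ℕ => aa n * (ρ^2)^n) := by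
  refine Summable.of_nonneg_of_le (fun n => mul_nonneg (aa_nonneg n) (by positivity)) (fun n => ?_)
    (sum_geom hρ0 hρ1)
  have := mul_le_mul_of_nonneg_right (aa_le_one n) (by positivity : (0:ℝ) ≤ (ρ^2)^n)
  simpa using this

lemma sum_term (hβ : 0 ≤ β) (hρ0 : 0 ≤ ρ) (hρ1 : ρ < 1) :
    Summable (fun n : ℕ => aa n * rr β n * (ρ^2)^n) :=
  Summable.of_nonneg_of_le (term_nonneg hβ hρ0) (term_le hβ hρ0) (sum_aa hρ0 hρ1)

lemma S_eq (hρ0 : 0 ≤ ρ) (hρ1 : ρ < 1) :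
    (∑' n : ℕ, aa n * (ρ^2)^n) = 1 / Real.sqrt (1 - ρ^2) := by
  set x : ℝ := ρ^2 with hx
  have hx0 : 0 ≤ x := by positivity
  have hx1 : x < 1 := by nlinarith
  set f : ℕ → ℝ := fun n => aa n * x^n with hf
  have hfn : ∀ n, 0 ≤ f n := fun n => mul_nonneg (aa_nonneg n) (by positivity)
  have hsum : Summable f := sum_aa hρ0 hρ1
  have hnorm : Summable (fun n => ‖f n‖) :=
    hsum.congr (fun n => (Real.norm_of_nonneg (hfn n)).symm)
  have cauchy : (∑' n, f n) * (∑' n, f n)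
      = ∑' n : ℕ, ∑ k ∈ range (n+1), f k * f (n-k) :=
    tsum_mul_tsum_eq_tsum_sum_range_of_summable_norm hnorm hnorm
  have inner : ∀ n : ℕ, ∑ k ∈ range (n+1), f k * f (n-k) = x^n := by
    intro n
    have : ∀ k ∈ range (n+1), f k * f (n-k) = aa k * aa (n-k) * x^n := by
      intro k hk
      have hk' : k ≤ n := by have := Finset.mem_range.mp hk; omega
      have : x^k * x^(n-k) = x^n := by
        rw [← pow_add]; congr 1; omega
      simp only [hf]
      calc aa k * x^k * (aa (n-k) * x^(n-k)) = aa k * aa (n-k) * (x^k * x^(n-k)) := by ring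
        _ = aa k * aa (n-k) * x^n := by rw [this]
    rw [Finset.sum_congr rfl this, ← Finset.sum_mul, conv_one n, one_mul]
  have hSsq : (∑' n, f n) * (∑' n, f n) = (1-x)⁻¹ := by
    rw [cauchy, tsum_congr inner, tsum_geometric_of_lt_one hx0 hx1]
  have hS0 : 0 ≤ ∑' n, f n := tsum_nonneg hfn
  have : (∑' n, f n) = Real.sqrt ((1-x)⁻¹) := by
    rw [← hSsq]; exact (Real.sqrt_mul_self hS0).symm
  rw [this, Real.sqrt_inv, one_div]

end main

/-- Lemma A.2: for `0 ≤ β₁ ≤ β₂` and `ρ ∈ [0,1)`,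
`1 ≤ G_{β₁}(ρ) ≤ G_{β₂}(ρ) ≤ 1/√(1-ρ²)`. -/
theorem stmt9 (β₁ β₂ : ℝ) (h1 : 0 ≤ β₁) (h12 : β₁ ≤ β₂)
    (ρ : ℝ) (hρ0 : 0 ≤ ρ) (hρ1 : ρ < 1) :
    1 ≤ Gfun β₁ ρ ∧ Gfun β₁ ρ ≤ Gfun β₂ ρ ∧ Gfun β₂ ρ ≤ 1 / Real.sqrt (1 - ρ ^ 2) := by
  have h2 : 0 ≤ β₂ := le_trans h1 h12
  rw [Gfun_eq, Gfun_eq]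
  refine ⟨?_, ?_, ?_⟩
  · have h0 : aa 0 * rr β₁ 0 * (ρ^2)^0 = 1 := by simp [aa_zero, rr_zero]
    calc (1:ℝ) = aa 0 * rr β₁ 0 * (ρ^2)^0 := h0.symm
      _ ≤ ∑' n : ℕ, aa n * rr β₁ n * (ρ^2)^n :=
        Summable.le_tsum (sum_term h1 hρ0 hρ1) 0 (fun i _ => term_nonneg h1 hρ0 i)
  · refine Summable.tsum_le_tsum (fun n => ?_) (sum_term h1 hρ0 hρ1) (sum_term h2 hρ0 hρ1)
    exact mul_le_mul_of_nonneg_right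
      (mul_le_mul_of_nonneg_left (rr_mono h1 h12 n) (aa_nonneg n))
      (by positivity)
  · calc (∑' n : ℕ, aa n * rr β₂ n * (ρ^2)^n) ≤ ∑' n : ℕ, aa n * (ρ^2)^n :=
        Summable.tsum_le_tsum (term_le h2 hρ0) (sum_term h2 hρ0 hρ1) (sum_aa hρ0 hρ1)
      _ = 1 / Real.sqrt (1 - ρ^2) := S_eq hρ0 hρ1
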